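/- arXiv:2304.00118 — 3 statements merged into one kernel-verified Lean document; each statement's English description precedes it below -/
import Mathlib

section
/- Let Ω ⊂ ℝⁿ be a bounded measurable set with |Ω| > 0 whose topological boundary ∂Ω satisfies 0 < M₂ ≤ lower Minkowski α-content of ∂Ω ≤ upper Minkowski α-content of ∂Ω ≤ M₁ < ∞ for some α ∈ [n−1, n]. Assume J : ℝⁿ → ℝ is nonnegative, integrable, satisfies ∫ J(z)|z|ⁿ dz < ∞, and J(z) ≥ c_J > 0 for |z| ≤ a_J. Assume further that for all x ∈ ∂Ω and t ∈ (0,1), min{|B(x,t) ∩ Ω|, |B(x,t) ∩ Ωᶜ|} ≥ D · tⁿ for some constant D > 0. Then 0 < liminf_{t→0⁺} t^(−(2n−α)) ∫_Ω ∫_{Ωᶜ} J((x−y)/t) dx dy ≤ limsup_{t→0⁺} t^(−(2n−α)) ∫_Ω ∫_{Ωᶜ} J((x−y)/t) dx dy < ∞. -/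
open MeasureTheory Metric Filter Topology
open scoped ENNReal NNReal

private lemma aux_cross {n : ℕ} {Ω : Set (EuclideanSpace ℝ (Fin n))}
    {x z : EuclideanSpace ℝ (Fin n)} (hx : x ∈ Ω) (hy : x - z ∈ Ωᶜ) :
    x ∈ cthickening ‖z‖ (frontier Ω) := by
  obtain ⟨q, hqf, hqs⟩ : ∃ q ∈ frontier Ω, q ∈ segment ℝ (x - z) x := by
    by_contra h
    push_neg at h
    have hseg : IsPreconnected (segment ℝ (x - z) x) := (convex_segment _ _).isPreconnected
    have hsub : segment ℝ (x - z) x ⊆ interior Ω ∪ (closure Ω)ᶜ := by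
      intro q hq
      rcases em (q ∈ closure Ω) with hc | hc
      · rcases em (q ∈ interior Ω) with hi | hi
        · exact Or.inl hi
        · exact absurd ⟨hc, hi⟩ (fun hf => h q hf hq)
      · exact Or.inr hc
    have h1 : (segment ℝ (x - z) x ∩ interior Ω).Nonempty := by
      refine ⟨x, right_mem_segment _ _ _, ?_⟩
      rcases em (x ∈ interior Ω) with hi | hi
      · exact hi
      · exact absurd ⟨subset_closure hx, hi⟩ (fun hf => h x hf (right_mem_segment _ _ _))
    have h2 : (segment ℝ (x - z) x ∩ (closure Ω)ᶜ).Nonempty := by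
      refine ⟨x - z, left_mem_segment _ _ _, fun hc => ?_⟩
      rcases em (x - z ∈ interior Ω) with hi | hi
      · exact hy (interior_subset hi)
      · exact absurd ⟨hc, hi⟩ (fun hf => h _ hf (left_mem_segment _ _ _))
    obtain ⟨q, _, hqi, hqc⟩ := hseg _ _ isOpen_interior isClosed_closure.isOpen_compl hsub h1 h2
    exact hqc (subset_closure (interior_subset hqi))
  have hsegsub : segment ℝ (x - z) x ⊆ closedBall x ‖z‖ := by
    apply (convex_closedBall x ‖z‖).segment_subset
    · simp [mem_closedBall, dist_eq_norm, sub_sub_cancel_left]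
    · exact mem_closedBall_self (norm_nonneg z)
  exact mem_cthickening_of_dist_le x q ‖z‖ _ hqf
    (by simpa [dist_comm] using mem_closedBall.1 (hsegsub hqs))

private lemma aux_scale {n : ℕ} {t : ℝ} (ht : 0 < t)
    {g : EuclideanSpace ℝ (Fin n) → ℝ≥0∞} (hg : Measurable g) :
    ∫⁻ z, g z = ENNReal.ofReal (t ^ n) * ∫⁻ w, g (t • w) := by
  have h1 : ∫⁻ w, g (t • w) =
      ∫⁻ z, g z ∂(Measure.map (fun w : EuclideanSpace ℝ (Fin n) => t • w) volume) :=
    (lintegral_map hg (measurable_const_smul t)).symm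
  rw [h1, Measure.map_addHaar_smul volume ht.ne', lintegral_smul_measure,
    finrank_euclideanSpace_fin, abs_inv, abs_of_pos (pow_pos ht n),
    ENNReal.ofReal_inv_of_pos (pow_pos ht n), smul_eq_mul, ← mul_assoc,
    ENNReal.mul_inv_cancel (ENNReal.ofReal_pos.2 (pow_pos ht n)).ne' ENNReal.ofReal_ne_top,
    one_mul]

private lemma aux_scaleInv {n : ℕ} {t : ℝ} (ht : 0 < t)
    {f : EuclideanSpace ℝ (Fin n) → ℝ≥0∞} (hf : Measurable f) :
    ∫⁻ z, f (t⁻¹ • z) = ENNReal.ofReal (t ^ n) * ∫⁻ w, f w := by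
  have h1 : ∫⁻ z, f (t⁻¹ • z) =
      ∫⁻ z, f z ∂(Measure.map (fun w : EuclideanSpace ℝ (Fin n) => t⁻¹ • w) volume) :=
    (lintegral_map hf (measurable_const_smul t⁻¹)).symm
  rw [h1, Measure.map_addHaar_smul volume (inv_ne_zero ht.ne'), lintegral_smul_measure,
    finrank_euclideanSpace_fin, inv_pow, inv_inv, abs_of_pos (pow_pos ht n), smul_eq_mul]

private lemma aux_gmeas {n : ℕ} {Ω : Set (EuclideanSpace ℝ (Fin n))} (hmeas : MeasurableSet Ω) :
    Measurable fun z : EuclideanSpace ℝ (Fin n) => volume ({x | x - z ∈ Ωᶜ} ∩ Ω) := by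
  have hS : ∀ z : EuclideanSpace ℝ (Fin n), MeasurableSet {x : EuclideanSpace ℝ (Fin n) | x - z ∈ Ωᶜ} :=
    fun z => (measurable_id.sub measurable_const) hmeas.compl
  have heq : (fun z : EuclideanSpace ℝ (Fin n) => volume ({x | x - z ∈ Ωᶜ} ∩ Ω)) =
      fun z => ∫⁻ x in Ω, (Ωᶜ).indicator (1 : EuclideanSpace ℝ (Fin n) → ℝ≥0∞) (x - z) := by
    funext z
    have h0 : ∀ x : EuclideanSpace ℝ (Fin n),
        (Ωᶜ).indicator (1 : EuclideanSpace ℝ (Fin n) → ℝ≥0∞) (x - z) =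
          ({x : EuclideanSpace ℝ (Fin n) | x - z ∈ Ωᶜ}).indicator
            (1 : EuclideanSpace ℝ (Fin n) → ℝ≥0∞) x := by
      intro x; by_cases h : x - z ∈ Ωᶜ
      · rw [Set.indicator_of_mem h, Set.indicator_of_mem (by exact h)]; rfl
      · rw [Set.indicator_of_notMem h, Set.indicator_of_notMem (by exact h)]
    rw [lintegral_congr h0, lintegral_indicator_one (hS z), Measure.restrict_apply (hS z)]
  rw [heq]
  have hm : Measurable fun p : EuclideanSpace ℝ (Fin n) × EuclideanSpace ℝ (Fin n) =>
      (Ωᶜ).indicator (1 : EuclideanSpace ℝ (Fin n) → ℝ≥0∞) (p.1 - p.2) :=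
    (measurable_one.indicator hmeas.compl).comp (measurable_fst.sub measurable_snd)
  exact Measurable.lintegral_prod_left
    (f := fun x z => (Ωᶜ).indicator (1 : EuclideanSpace ℝ (Fin n) → ℝ≥0∞) (x - z)) hm

private lemma aux_swap {n : ℕ} {Ω : Set (EuclideanSpace ℝ (Fin n))} (hmeas : MeasurableSet Ω)
    {f : EuclideanSpace ℝ (Fin n) → ℝ≥0∞} (hf : Measurable f) :
    ∫⁻ x in Ω, ∫⁻ y in Ωᶜ, f (x - y) =
      ∫⁻ z, f z * volume ({x | x - z ∈ Ωᶜ} ∩ Ω) := by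
  have hS : ∀ z : EuclideanSpace ℝ (Fin n), MeasurableSet {x : EuclideanSpace ℝ (Fin n) | x - z ∈ Ωᶜ} :=
    fun z => (measurable_id.sub measurable_const) hmeas.compl
  calc ∫⁻ x in Ω, ∫⁻ y in Ωᶜ, f (x - y)
      = ∫⁻ x in Ω, ∫⁻ z, f z * (Ωᶜ).indicator 1 (x - z) := by
        refine lintegral_congr fun x => ?_
        have hind : Measurable ((Ωᶜ).indicator fun y => f (x - y)) :=
          (hf.comp (measurable_const.sub measurable_id)).indicator hmeas.compl
        rw [← lintegral_indicator hmeas.compl]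
        rw [← (Measure.measurePreserving_sub_left volume x).lintegral_comp hind]
        refine lintegral_congr fun z => ?_
        by_cases h : x - z ∈ Ωᶜ
        · simp [Set.indicator_of_mem h, sub_sub_cancel]
        · simp [Set.indicator_of_notMem h]
    _ = ∫⁻ z, ∫⁻ x in Ω, f z * (Ωᶜ).indicator 1 (x - z) := by
        apply lintegral_lintegral_swap
        exact ((hf.comp measurable_snd).mul
          ((measurable_one.indicator hmeas.compl).comp (measurable_fst.sub measurable_snd))).aemeasurable
    _ = ∫⁻ z, f z * volume ({x | x - z ∈ Ωᶜ} ∩ Ω) := by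
        refine lintegral_congr fun z => ?_
        have hm : Measurable fun x : EuclideanSpace ℝ (Fin n) =>
            (Ωᶜ).indicator (1 : EuclideanSpace ℝ (Fin n) → ℝ≥0∞) (x - z) :=
          (measurable_one.indicator hmeas.compl).comp (measurable_id.sub measurable_const)
        rw [lintegral_const_mul _ hm]
        congr 1
        have h0 : ∀ x : EuclideanSpace ℝ (Fin n),
            (Ωᶜ).indicator (1 : EuclideanSpace ℝ (Fin n) → ℝ≥0∞) (x - z) =
              ({x : EuclideanSpace ℝ (Fin n) | x - z ∈ Ωᶜ}).indicator
                (1 : EuclideanSpace ℝ (Fin n) → ℝ≥0∞) x := by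
          intro x; by_cases h : x - z ∈ Ωᶜ
          · rw [Set.indicator_of_mem h, Set.indicator_of_mem (by exact h)]; rfl
          · rw [Set.indicator_of_notMem h, Set.indicator_of_notMem (by exact h)]
        rw [lintegral_congr h0, lintegral_indicator_one (hS z), Measure.restrict_apply (hS z)]

private lemma aux_relate {n : ℕ} {Ω : Set (EuclideanSpace ℝ (Fin n))}
    (hmeas : MeasurableSet Ω) (hΩfin : volume Ω ≠ ⊤)
    {J J₁ : EuclideanSpace ℝ (Fin n) → ℝ}
    (hJ₁meas : Measurable J₁) (hJ₁nn : ∀ z, 0 ≤ J₁ z) (hJ₁e : J =ᵐ[volume] J₁)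
    (hIJ : ∫⁻ z, ENNReal.ofReal (J₁ z) ≠ ⊤) {t : ℝ} (ht : 0 < t) :
    ENNReal.ofReal (∫ x in Ω, ∫ y in Ωᶜ, J (t⁻¹ • (x - y))) =
      ∫⁻ x in Ω, ∫⁻ y in Ωᶜ, ENNReal.ofReal (J₁ (t⁻¹ • (x - y))) := by
  have hae : ∀ x : EuclideanSpace ℝ (Fin n),
      (fun y => J (t⁻¹ • (x - y))) =ᵐ[volume] fun y => J₁ (t⁻¹ • (x - y)) := by
    intro x
    have qmp : Measure.QuasiMeasurePreserving
        (fun y : EuclideanSpace ℝ (Fin n) => t⁻¹ • (x - y)) volume volume :=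
      (Measure.quasiMeasurePreserving_smul volume (inv_ne_zero ht.ne')).comp
        ((Measure.measurePreserving_sub_left volume x).quasiMeasurePreserving)
    exact qmp.ae_eq_comp hJ₁e
  have hmeasInner : ∀ x : EuclideanSpace ℝ (Fin n),
      Measurable fun y : EuclideanSpace ℝ (Fin n) => J₁ (t⁻¹ • (x - y)) := fun x =>
    hJ₁meas.comp ((measurable_const.sub measurable_id).const_smul t⁻¹)
  have hinner : ∀ x : EuclideanSpace ℝ (Fin n), ∫ y in Ωᶜ, J (t⁻¹ • (x - y)) =
      (∫⁻ y in Ωᶜ, ENNReal.ofReal (J₁ (t⁻¹ • (x - y)))).toReal := by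
    intro x
    rw [integral_congr_ae (ae_restrict_of_ae (hae x)),
      integral_eq_lintegral_of_nonneg_ae (ae_of_all _ fun y => hJ₁nn _)
        (hmeasInner x).aestronglyMeasurable]
  have hfin : ∀ x : EuclideanSpace ℝ (Fin n),
      (∫⁻ y in Ωᶜ, ENNReal.ofReal (J₁ (t⁻¹ • (x - y)))) ≤
        ENNReal.ofReal (t ^ n) * ∫⁻ w, ENNReal.ofReal (J₁ w) := by
    intro x
    refine le_trans (setLIntegral_le_lintegral _ _) (le_of_eq ?_)
    calc ∫⁻ y, ENNReal.ofReal (J₁ (t⁻¹ • (x - y)))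
        = ∫⁻ z, ENNReal.ofReal (J₁ (t⁻¹ • z)) :=
          (Measure.measurePreserving_sub_left volume x).lintegral_comp
            (f := fun z => ENNReal.ofReal (J₁ (t⁻¹ • z)))
            (ENNReal.measurable_ofReal.comp (hJ₁meas.comp (measurable_const_smul t⁻¹)))
      _ = ENNReal.ofReal (t ^ n) * ∫⁻ w, ENNReal.ofReal (J₁ w) :=
          aux_scaleInv ht (f := fun z => ENNReal.ofReal (J₁ z))
            (ENNReal.measurable_ofReal.comp hJ₁meas)
  have hT : ENNReal.ofReal (t ^ n) * ∫⁻ w, ENNReal.ofReal (J₁ w) < ⊤ :=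
    ENNReal.mul_lt_top ENNReal.ofReal_lt_top (lt_top_iff_ne_top.2 hIJ)
  have hGmeas : Measurable fun x : EuclideanSpace ℝ (Fin n) =>
      ∫⁻ y in Ωᶜ, ENNReal.ofReal (J₁ (t⁻¹ • (x - y))) := by
    apply Measurable.lintegral_prod_right
      (f := fun x y : EuclideanSpace ℝ (Fin n) => ENNReal.ofReal (J₁ (t⁻¹ • (x - y))))
    exact ENNReal.measurable_ofReal.comp
      (hJ₁meas.comp ((measurable_fst.sub measurable_snd).const_smul t⁻¹))
  rw [show (∫ x in Ω, ∫ y in Ωᶜ, J (t⁻¹ • (x - y))) =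
      ∫ x in Ω, (∫⁻ y in Ωᶜ, ENNReal.ofReal (J₁ (t⁻¹ • (x - y)))).toReal from
    integral_congr_ae (ae_of_all _ hinner)]
  rw [integral_toReal hGmeas.aemeasurable (ae_of_all _ fun x => lt_of_le_of_lt (hfin x) hT)]
  rw [ENNReal.ofReal_toReal]
  refine ne_of_lt (lt_of_le_of_lt (lintegral_mono fun x => hfin x) ?_)
  rw [setLIntegral_const]
  exact ENNReal.mul_lt_top hT (lt_top_iff_ne_top.2 hΩfin)


private lemma aux_upper {n : ℕ} (hn : 0 < n) {Ω : Set (EuclideanSpace ℝ (Fin n))}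
    (hmeas : MeasurableSet Ω) (hΩfin : volume Ω ≠ ⊤) {α : ℝ} (hα0 : 0 ≤ α) (hαn : α ≤ n)
    {J₁ : EuclideanSpace ℝ (Fin n) → ℝ} (hJ₁meas : Measurable J₁) (hJ₁nn : ∀ z, 0 ≤ J₁ z)
    (hIJ : ∫⁻ z, ENNReal.ofReal (J₁ z) ≠ ⊤)
    (hMom : ∫⁻ z, ENNReal.ofReal (J₁ z) * ENNReal.ofReal (‖z‖ ^ n) ≠ ⊤)
    {M' t₀ : ℝ} (hM' : 0 ≤ M') (ht₀pos : 0 < t₀)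
    (ht₀ : ∀ r : ℝ, 0 < r → r < t₀ →
      volume (thickening r (frontier Ω)) ≤ ENNReal.ofReal (M' * r ^ ((n:ℝ) - α))) :
    ∃ C : ℝ≥0∞, C ≠ ⊤ ∧ ∀ t : ℝ, 0 < t → t ≤ 1 →
      (∫⁻ x in Ω, ∫⁻ y in Ωᶜ, ENNReal.ofReal (J₁ (t⁻¹ • (x - y)))) ≤
        C * ENNReal.ofReal (t ^ (2 * (n:ℝ) - α)) := by
  classical
  haveI : Nonempty (Fin n) := ⟨⟨0, hn⟩⟩
  have hnα : (0:ℝ) ≤ (n:ℝ) - α := by linarith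
  set Mom : ℝ≥0∞ := ∫⁻ z, ENNReal.ofReal (J₁ z) * ENNReal.ofReal (‖z‖ ^ n) with hMomdef
  set B : ℝ≥0∞ := ∫⁻ w, ENNReal.ofReal (J₁ w) * ENNReal.ofReal (‖w‖ ^ ((n:ℝ) - α)) with hBdef
  have hmeasJ : Measurable fun w : EuclideanSpace ℝ (Fin n) => ENNReal.ofReal (J₁ w) :=
    ENNReal.measurable_ofReal.comp hJ₁meas
  have hmeasB : Measurable fun w : EuclideanSpace ℝ (Fin n) =>
      ENNReal.ofReal (J₁ w) * ENNReal.ofReal (‖w‖ ^ ((n:ℝ) - α)) :=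
    hmeasJ.mul (ENNReal.measurable_ofReal.comp
      ((Real.continuous_rpow_const hnα).measurable.comp measurable_norm))
  have hmeasMom : Measurable fun w : EuclideanSpace ℝ (Fin n) =>
      ENNReal.ofReal (J₁ w) * ENNReal.ofReal (‖w‖ ^ n) :=
    hmeasJ.mul (ENNReal.measurable_ofReal.comp (measurable_norm.pow_const n))
  have hB : B ≠ ⊤ := by
    have hptw : ∀ w : EuclideanSpace ℝ (Fin n),
        ENNReal.ofReal (J₁ w) * ENNReal.ofReal (‖w‖ ^ ((n:ℝ) - α)) ≤
          ENNReal.ofReal (J₁ w) + ENNReal.ofReal (J₁ w) * ENNReal.ofReal (‖w‖ ^ n) := by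
      intro w
      have hcase : ENNReal.ofReal (‖w‖ ^ ((n:ℝ) - α)) ≤ 1 + ENNReal.ofReal (‖w‖ ^ n) := by
        rcases le_total ‖w‖ 1 with h | h
        · refine le_trans ?_ le_self_add
          rw [← ENNReal.ofReal_one]
          exact ENNReal.ofReal_le_ofReal (Real.rpow_le_one (norm_nonneg w) h hnα)
        · refine le_trans ?_ le_add_self
          refine ENNReal.ofReal_le_ofReal ?_
          rw [← Real.rpow_natCast ‖w‖ n]
          exact Real.rpow_le_rpow_of_exponent_le h (by linarith)
      calc ENNReal.ofReal (J₁ w) * ENNReal.ofReal (‖w‖ ^ ((n:ℝ) - α))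
          ≤ ENNReal.ofReal (J₁ w) * (1 + ENNReal.ofReal (‖w‖ ^ n)) := mul_le_mul_right hcase _
        _ = ENNReal.ofReal (J₁ w) + ENNReal.ofReal (J₁ w) * ENNReal.ofReal (‖w‖ ^ n) := by
            rw [mul_add, mul_one]
    refine ne_of_lt (lt_of_le_of_lt (lintegral_mono hptw) ?_)
    rw [lintegral_add_left hmeasJ]
    exact ENNReal.add_lt_top.2 ⟨lt_top_iff_ne_top.2 hIJ, lt_top_iff_ne_top.2 hMom⟩
  refine ⟨ENNReal.ofReal (M' * 2 ^ ((n:ℝ) - α)) * B +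
    volume Ω * Mom * ENNReal.ofReal ((2 / t₀) ^ n), ?_, ?_⟩
  · exact ENNReal.add_ne_top.2 ⟨ENNReal.mul_ne_top ENNReal.ofReal_ne_top hB,
      ENNReal.mul_ne_top (ENNReal.mul_ne_top hΩfin hMom) ENNReal.ofReal_ne_top⟩
  intro t ht ht1
  have hft : Measurable fun z : EuclideanSpace ℝ (Fin n) => ENNReal.ofReal (J₁ (t⁻¹ • z)) :=
    ENNReal.measurable_ofReal.comp (hJ₁meas.comp (measurable_const_smul t⁻¹))
  have hgmeas := aux_gmeas (Ω := Ω) hmeas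
  -- pointwise a.e. bound
  have hae0 : ∀ᵐ w : EuclideanSpace ℝ (Fin n), w ≠ 0 := by
    have h0 : {w : EuclideanSpace ℝ (Fin n) | ¬ w ≠ 0} = {(0 : EuclideanSpace ℝ (Fin n))} := by
      ext w; simp
    rw [ae_iff, h0]
    exact measure_singleton 0
  have hbound : ∀ w : EuclideanSpace ℝ (Fin n), w ≠ 0 →
      ENNReal.ofReal (J₁ w) * volume ({x | x - t • w ∈ Ωᶜ} ∩ Ω) ≤
        ENNReal.ofReal (M' * 2 ^ ((n:ℝ) - α)) *
          (ENNReal.ofReal (J₁ w) * ENNReal.ofReal ((t * ‖w‖) ^ ((n:ℝ) - α))) +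
        volume Ω * (ENNReal.ofReal (J₁ w) *
          Set.indicator {w : EuclideanSpace ℝ (Fin n) | t₀ ≤ 2 * (t * ‖w‖)} 1 w) := by
    intro w hw
    have hwpos : 0 < ‖w‖ := norm_pos_iff.2 hw
    have htw : 0 < t * ‖w‖ := mul_pos ht hwpos
    have hcross : volume ({x | x - t • w ∈ Ωᶜ} ∩ Ω) ≤
        volume (cthickening (t * ‖w‖) (frontier Ω)) := by
      refine measure_mono ?_
      rintro x ⟨hx1, hx2⟩
      have h := aux_cross hx2 hx1
      rwa [norm_smul, Real.norm_eq_abs, abs_of_pos ht] at h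
    by_cases hcase : 2 * (t * ‖w‖) < t₀
    · calc ENNReal.ofReal (J₁ w) * volume ({x | x - t • w ∈ Ωᶜ} ∩ Ω)
          ≤ ENNReal.ofReal (J₁ w) * ENNReal.ofReal (M' * (2 * (t * ‖w‖)) ^ ((n:ℝ) - α)) := by
            refine mul_le_mul_right (le_trans hcross (le_trans (measure_mono
              (cthickening_subset_thickening' (by linarith) (by linarith) _))
              (ht₀ _ (by linarith) hcase))) _
        _ = ENNReal.ofReal (M' * 2 ^ ((n:ℝ) - α)) *
              (ENNReal.ofReal (J₁ w) * ENNReal.ofReal ((t * ‖w‖) ^ ((n:ℝ) - α))) := by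
            rw [show M' * (2 * (t * ‖w‖)) ^ ((n:ℝ) - α)
                = (M' * 2 ^ ((n:ℝ) - α)) * (t * ‖w‖) ^ ((n:ℝ) - α) by
              rw [Real.mul_rpow (by norm_num) (le_of_lt htw)]; ring]
            rw [ENNReal.ofReal_mul (mul_nonneg hM' (Real.rpow_nonneg (by norm_num) _))]
            ring
        _ ≤ _ := le_self_add
    · calc ENNReal.ofReal (J₁ w) * volume ({x | x - t • w ∈ Ωᶜ} ∩ Ω)
          ≤ ENNReal.ofReal (J₁ w) * volume Ω :=
            mul_le_mul_right (measure_mono Set.inter_subset_right) _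
        _ = volume Ω * (ENNReal.ofReal (J₁ w) *
              Set.indicator {w : EuclideanSpace ℝ (Fin n) | t₀ ≤ 2 * (t * ‖w‖)} 1 w) := by
            rw [Set.indicator_of_mem (show w ∈ {w : EuclideanSpace ℝ (Fin n) | t₀ ≤ 2 * (t * ‖w‖)}
              from not_lt.1 hcase), Pi.one_apply, mul_one, mul_comm]
        _ ≤ _ := le_add_self
  have hmeasP1 : Measurable fun w : EuclideanSpace ℝ (Fin n) =>
      ENNReal.ofReal (J₁ w) * ENNReal.ofReal ((t * ‖w‖) ^ ((n:ℝ) - α)) :=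
    hmeasJ.mul (ENNReal.measurable_ofReal.comp
      ((Real.continuous_rpow_const hnα).measurable.comp (measurable_norm.const_mul t)))
  have hmeasInd : Measurable fun w : EuclideanSpace ℝ (Fin n) =>
      ENNReal.ofReal (J₁ w) *
        Set.indicator {w : EuclideanSpace ℝ (Fin n) | t₀ ≤ 2 * (t * ‖w‖)} 1 w := by
    refine hmeasJ.mul (measurable_one.indicator ?_)
    exact measurableSet_le measurable_const ((measurable_norm.const_mul t).const_mul 2)
  have hP1 : ∫⁻ w, ENNReal.ofReal (J₁ w) * ENNReal.ofReal ((t * ‖w‖) ^ ((n:ℝ) - α)) =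
      ENNReal.ofReal (t ^ ((n:ℝ) - α)) * B := by
    rw [hBdef, ← lintegral_const_mul _ hmeasB]
    refine lintegral_congr fun w => ?_
    rw [Real.mul_rpow ht.le (norm_nonneg w), ENNReal.ofReal_mul (Real.rpow_nonneg ht.le _)]
    ring
  have hP2 : ∫⁻ w, ENNReal.ofReal (J₁ w) *
        Set.indicator {w : EuclideanSpace ℝ (Fin n) | t₀ ≤ 2 * (t * ‖w‖)} 1 w ≤
      ENNReal.ofReal ((2 * t / t₀) ^ n) * Mom := by
    rw [hMomdef, ← lintegral_const_mul _ hmeasMom]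
    refine lintegral_mono fun w => ?_
    by_cases hcase : t₀ ≤ 2 * (t * ‖w‖)
    · rw [Set.indicator_of_mem (show w ∈ {w : EuclideanSpace ℝ (Fin n) | t₀ ≤ 2 * (t * ‖w‖)}
        from hcase), Pi.one_apply, mul_one]
      have h1 : (1:ℝ) ≤ (2 * t / t₀) * ‖w‖ := by
        rw [div_mul_eq_mul_div, le_div_iff₀ ht₀pos]; nlinarith [norm_nonneg w]
      have h2 : (1:ℝ) ≤ (2 * t / t₀) ^ n * ‖w‖ ^ n := by
        calc (1:ℝ) = 1 ^ n := (one_pow n).symm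
          _ ≤ ((2 * t / t₀) * ‖w‖) ^ n := pow_le_pow_left₀ (by norm_num) h1 n
          _ = _ := mul_pow _ _ n
      calc ENNReal.ofReal (J₁ w) = ENNReal.ofReal (J₁ w) * 1 := (mul_one _).symm
        _ ≤ ENNReal.ofReal (J₁ w) * ENNReal.ofReal ((2 * t / t₀) ^ n * ‖w‖ ^ n) :=
            mul_le_mul_right (ENNReal.one_le_ofReal.2 h2) _
        _ = ENNReal.ofReal ((2 * t / t₀) ^ n) *
              (ENNReal.ofReal (J₁ w) * ENNReal.ofReal (‖w‖ ^ n)) := by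
            rw [ENNReal.ofReal_mul (by positivity)]; ring
    · rw [Set.indicator_of_notMem (show w ∉ {w : EuclideanSpace ℝ (Fin n) | t₀ ≤ 2 * (t * ‖w‖)}
        from hcase), mul_zero]
      exact zero_le
  have e1 : ENNReal.ofReal (t ^ n) * ENNReal.ofReal (t ^ ((n:ℝ) - α)) =
      ENNReal.ofReal (t ^ (2 * (n:ℝ) - α)) := by
    rw [← ENNReal.ofReal_mul (by positivity)]
    congr 1
    rw [← Real.rpow_natCast t n, ← Real.rpow_add ht,
      show (n:ℝ) + ((n:ℝ) - α) = 2 * (n:ℝ) - α by ring]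
  have e2 : ENNReal.ofReal (t ^ n) * ENNReal.ofReal ((2 * t / t₀) ^ n) ≤
      ENNReal.ofReal ((2 / t₀) ^ n) * ENNReal.ofReal (t ^ (2 * (n:ℝ) - α)) := by
    rw [← ENNReal.ofReal_mul (by positivity), ← ENNReal.ofReal_mul (by positivity)]
    refine ENNReal.ofReal_le_ofReal ?_
    have h3 : t ^ n * (2 * t / t₀) ^ n = (2 / t₀) ^ n * (t ^ n * t ^ n) := by
      rw [show 2 * t / t₀ = (2 / t₀) * t by ring, mul_pow]; ring
    rw [h3]
    refine mul_le_mul_of_nonneg_left ?_ (by positivity)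
    have h4 : t ^ n * t ^ n = t ^ (2 * (n:ℝ)) := by
      rw [← Real.rpow_natCast t n, ← Real.rpow_add ht]
      norm_num; ring_nf
    rw [h4]
    exact Real.rpow_le_rpow_of_exponent_ge ht ht1 (by linarith)
  calc (∫⁻ x in Ω, ∫⁻ y in Ωᶜ, ENNReal.ofReal (J₁ (t⁻¹ • (x - y))))
      = ∫⁻ z, ENNReal.ofReal (J₁ (t⁻¹ • z)) * volume ({x | x - z ∈ Ωᶜ} ∩ Ω) :=
        aux_swap hmeas (f := fun z => ENNReal.ofReal (J₁ (t⁻¹ • z))) hft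
    _ = ENNReal.ofReal (t ^ n) * ∫⁻ w, ENNReal.ofReal (J₁ (t⁻¹ • (t • w))) *
          volume ({x | x - t • w ∈ Ωᶜ} ∩ Ω) :=
        aux_scale ht (g := fun z => ENNReal.ofReal (J₁ (t⁻¹ • z)) *
          volume ({x | x - z ∈ Ωᶜ} ∩ Ω)) (hft.mul hgmeas)
    _ = ENNReal.ofReal (t ^ n) * ∫⁻ w, ENNReal.ofReal (J₁ w) *
          volume ({x | x - t • w ∈ Ωᶜ} ∩ Ω) := by
        congr 1
        refine lintegral_congr fun w => ?_
        rw [inv_smul_smul₀ ht.ne' w]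
    _ ≤ ENNReal.ofReal (t ^ n) * (ENNReal.ofReal (M' * 2 ^ ((n:ℝ) - α)) *
          (ENNReal.ofReal (t ^ ((n:ℝ) - α)) * B) +
          volume Ω * (ENNReal.ofReal ((2 * t / t₀) ^ n) * Mom)) := by
        refine mul_le_mul_right ?_ _
        calc ∫⁻ w, ENNReal.ofReal (J₁ w) * volume ({x | x - t • w ∈ Ωᶜ} ∩ Ω)
            ≤ ∫⁻ w, (ENNReal.ofReal (M' * 2 ^ ((n:ℝ) - α)) *
                (ENNReal.ofReal (J₁ w) * ENNReal.ofReal ((t * ‖w‖) ^ ((n:ℝ) - α))) +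
                volume Ω * (ENNReal.ofReal (J₁ w) *
                  Set.indicator {w : EuclideanSpace ℝ (Fin n) | t₀ ≤ 2 * (t * ‖w‖)} 1 w)) :=
              lintegral_mono_ae (by filter_upwards [hae0] with w hw using hbound w hw)
          _ = ENNReal.ofReal (M' * 2 ^ ((n:ℝ) - α)) *
                (∫⁻ w, ENNReal.ofReal (J₁ w) * ENNReal.ofReal ((t * ‖w‖) ^ ((n:ℝ) - α))) +
                volume Ω * (∫⁻ w, ENNReal.ofReal (J₁ w) *
                  Set.indicator {w : EuclideanSpace ℝ (Fin n) | t₀ ≤ 2 * (t * ‖w‖)} 1 w) := by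
              rw [lintegral_add_left (hmeasP1.const_mul _), lintegral_const_mul _ hmeasP1,
                lintegral_const_mul _ hmeasInd]
          _ ≤ _ := by
              rw [hP1]
              exact add_le_add_right (mul_le_mul_right hP2 _) _
    _ ≤ (ENNReal.ofReal (M' * 2 ^ ((n:ℝ) - α)) * B +
          volume Ω * Mom * ENNReal.ofReal ((2 / t₀) ^ n)) *
          ENNReal.ofReal (t ^ (2 * (n:ℝ) - α)) := by
        rw [mul_add, add_mul]
        refine add_le_add ?_ ?_
        · rw [show ENNReal.ofReal (t ^ n) * (ENNReal.ofReal (M' * 2 ^ ((n:ℝ) - α)) *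
              (ENNReal.ofReal (t ^ ((n:ℝ) - α)) * B))
            = ENNReal.ofReal (M' * 2 ^ ((n:ℝ) - α)) * B *
              (ENNReal.ofReal (t ^ n) * ENNReal.ofReal (t ^ ((n:ℝ) - α))) from by ring, e1]
        · rw [show ENNReal.ofReal (t ^ n) * (volume Ω * (ENNReal.ofReal ((2 * t / t₀) ^ n) * Mom))
            = volume Ω * Mom * (ENNReal.ofReal (t ^ n) * ENNReal.ofReal ((2 * t / t₀) ^ n))
              from by ring]
          calc volume Ω * Mom * (ENNReal.ofReal (t ^ n) * ENNReal.ofReal ((2 * t / t₀) ^ n))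
              ≤ volume Ω * Mom * (ENNReal.ofReal ((2 / t₀) ^ n) *
                  ENNReal.ofReal (t ^ (2 * (n:ℝ) - α))) := mul_le_mul_right e2 _
            _ = volume Ω * Mom * ENNReal.ofReal ((2 / t₀) ^ n) *
                  ENNReal.ofReal (t ^ (2 * (n:ℝ) - α)) := by ring


private lemma aux_lower {n : ℕ} {Ω : Set (EuclideanSpace ℝ (Fin n))}
    (hmeas : MeasurableSet Ω) (hbd : Bornology.IsBounded Ω)
    {J J₁ : EuclideanSpace ℝ (Fin n) → ℝ} (hJ₁e : J =ᵐ[volume] J₁)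
    {α M₂' : ℝ} (hM₂' : 0 ≤ M₂')
    {a_J c_J : ℝ} (ha : 0 < a_J) (hc : 0 < c_J)
    (hJlow : ∀ z, ‖z‖ ≤ a_J → c_J ≤ J z)
    {D : ℝ} (hD : 0 < D)
    (hdens : ∀ x ∈ frontier Ω, ∀ t ∈ Set.Ioo (0:ℝ) 1,
      D * t ^ n ≤ min (volume (ball x t ∩ Ω)).toReal (volume (ball x t ∩ Ωᶜ)).toReal)
    {t : ℝ} (ht : 0 < t) (ht1 : t < 1)
    (hvol : ENNReal.ofReal M₂' * ENNReal.ofReal (t ^ ((n:ℝ) - α)) ≤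
      volume (thickening t (frontier Ω))) :
    (ENNReal.ofReal (M₂' * c_J * (D * (min (a_J / 2) 1) ^ n) ^ 2 / 5 ^ n) /
        volume (ball (0 : EuclideanSpace ℝ (Fin n)) 1)) *
      ENNReal.ofReal (t ^ (2 * (n:ℝ) - α)) ≤
      ∫⁻ x in Ω, ∫⁻ y in Ωᶜ, ENNReal.ofReal (J₁ (t⁻¹ • (x - y))) := by
  classical
  set κ : ℝ := min (a_J / 2) 1 with hκdef
  have hκpos : 0 < κ := lt_min (by linarith) one_pos
  have hκ1 : κ ≤ 1 := min_le_right _ _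
  have hκa : 2 * κ ≤ a_J := by
    have h := min_le_left (a_J / 2) 1; rw [hκdef]; linarith
  set r : ℝ := κ * t with hrdef
  have hr0 : 0 < r := mul_pos hκpos ht
  have hrt : r ≤ t := by nlinarith
  have hr1 : r < 1 := lt_of_le_of_lt hrt ht1
  obtain ⟨u, husub, hdisj, hcov⟩ :=
    Vitali.exists_disjoint_subfamily_covering_enlargement_closedBall
      (frontier Ω) (fun p => p) (fun _ => t) t (fun _ _ => le_rfl) 4 (by norm_num)
  have hufin : u.Finite := by
    rw [← Set.not_infinite]
    intro hinf
    obtain ⟨R, hR⟩ := hbd.closure.subset_closedBall 0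
    have hfr_sub : frontier Ω ⊆ closedBall 0 R := fun p hp =>
      hR (frontier_subset_closure hp)
    set vcB : ℝ≥0∞ := volume (closedBall (0 : EuclideanSpace ℝ (Fin n)) t) with hvcBdef
    have hvcB : ∀ p : EuclideanSpace ℝ (Fin n), volume (closedBall p t) = vcB := fun p =>
      Measure.addHaar_closedBall_center volume p t
    have hvcB0 : vcB ≠ 0 := (measure_closedBall_pos volume 0 ht).ne'
    have hvcBtop : vcB ≠ ⊤ := measure_closedBall_lt_top.ne
    have hvtot : volume (closedBall (0 : EuclideanSpace ℝ (Fin n)) (R + t)) ≠ ⊤ :=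
      measure_closedBall_lt_top.ne
    obtain ⟨m, hm⟩ := ENNReal.exists_nat_gt
      (ENNReal.div_lt_top hvtot hvcB0).ne
    have hm' : volume (closedBall (0 : EuclideanSpace ℝ (Fin n)) (R + t)) < m * vcB :=
      (ENNReal.div_lt_iff (Or.inl hvcB0) (Or.inl hvcBtop)).1 hm
    obtain ⟨s, hs_sub, hs_card⟩ := hinf.exists_subset_card_eq m
    have hdisj' : (↑s : Set (EuclideanSpace ℝ (Fin n))).PairwiseDisjoint
        (fun p => closedBall p t) := hdisj.subset hs_sub
    have hsub2 : (⋃ p ∈ s, closedBall p t) ⊆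
        closedBall (0 : EuclideanSpace ℝ (Fin n)) (R + t) := by
      refine Set.iUnion₂_subset fun p hp => ?_
      refine closedBall_subset_closedBall' ?_
      have h1 : p ∈ closedBall (0 : EuclideanSpace ℝ (Fin n)) R :=
        hfr_sub (husub (hs_sub hp))
      have h2 := mem_closedBall.1 h1
      linarith
    have hcontr : (m : ℝ≥0∞) * vcB ≤
        volume (closedBall (0 : EuclideanSpace ℝ (Fin n)) (R + t)) := by
      calc (m : ℝ≥0∞) * vcB = ∑ _p ∈ s, vcB := by
            rw [Finset.sum_const, hs_card, nsmul_eq_mul]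
        _ = ∑ p ∈ s, volume (closedBall p t) := Finset.sum_congr rfl fun p _ => (hvcB p).symm
        _ = volume (⋃ p ∈ s, closedBall p t) :=
            (measure_biUnion_finset hdisj' fun p _ => measurableSet_closedBall).symm
        _ ≤ _ := measure_mono hsub2
    exact absurd hcontr (not_le.2 hm')
  set s : Finset (EuclideanSpace ℝ (Fin n)) := hufin.toFinset with hsdef
  set vb1 : ℝ≥0∞ := volume (ball (0 : EuclideanSpace ℝ (Fin n)) 1) with hvb1
  have hvb1pos : vb1 ≠ 0 := (measure_ball_pos volume 0 one_pos).ne'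
  have hvb1top : vb1 ≠ ⊤ := measure_ball_lt_top.ne
  have hcb : ∀ p : EuclideanSpace ℝ (Fin n),
      volume (closedBall p (5 * t)) = ENNReal.ofReal ((5 * t) ^ n) * vb1 := fun p => by
    rw [Measure.addHaar_closedBall volume p (by positivity), finrank_euclideanSpace_fin]
  have hcount : volume (thickening t (frontier Ω)) ≤
      s.card * (ENNReal.ofReal ((5 * t) ^ n) * vb1) := by
    have hsub : thickening t (frontier Ω) ⊆ ⋃ p ∈ s, closedBall p (5 * t) := by
      intro v hv
      obtain ⟨i, hi_mem, hi_d⟩ := mem_thickening_iff.1 hv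
      obtain ⟨b, hb, hsubb⟩ := hcov i hi_mem
      refine Set.mem_biUnion (hufin.mem_toFinset.2 hb) ?_
      have h1 : v ∈ closedBall i t := mem_closedBall.2 hi_d.le
      exact closedBall_subset_closedBall (by linarith) (hsubb h1)
    calc volume (thickening t (frontier Ω))
        ≤ volume (⋃ p ∈ s, closedBall p (5 * t)) := measure_mono hsub
      _ ≤ ∑ p ∈ s, volume (closedBall p (5 * t)) := measure_biUnion_finset_le s _
      _ = s.card * (ENNReal.ofReal ((5 * t) ^ n) * vb1) := by
          rw [Finset.sum_congr rfl fun p _ => hcb p, Finset.sum_const, nsmul_eq_mul]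
  have hdens2 : ∀ p ∈ s, ENNReal.ofReal (D * r ^ n) ≤ volume (ball p r ∩ Ω) ∧
      ENNReal.ofReal (D * r ^ n) ≤ volume (ball p r ∩ Ωᶜ) := by
    intro p hp
    have hpf : p ∈ frontier Ω := husub (hufin.mem_toFinset.1 hp)
    have hd := hdens p hpf r ⟨hr0, hr1⟩
    constructor
    · rw [ENNReal.ofReal_le_iff_le_toReal
        ((measure_mono Set.inter_subset_left).trans_lt measure_ball_lt_top).ne]
      exact le_trans hd (min_le_left _ _)
    · rw [ENNReal.ofReal_le_iff_le_toReal
        ((measure_mono Set.inter_subset_left).trans_lt measure_ball_lt_top).ne]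
      exact le_trans hd (min_le_right _ _)
  have hUmeas : MeasurableSet (⋃ p ∈ s, (ball p r ∩ Ω)) :=
    s.measurableSet_biUnion fun p _ => measurableSet_ball.inter hmeas
  have hUsub : (⋃ p ∈ s, (ball p r ∩ Ω)) ⊆ Ω :=
    Set.iUnion₂_subset fun p _ => Set.inter_subset_right
  have hUdisj : (↑s : Set (EuclideanSpace ℝ (Fin n))).PairwiseDisjoint
      (fun p => ball p r ∩ Ω) := by
    intro a haa b hbb hab
    refine Disjoint.mono ?_ ?_ (hdisj (hufin.mem_toFinset.1 haa) (hufin.mem_toFinset.1 hbb) hab)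
    · exact Set.inter_subset_left.trans
        (ball_subset_closedBall.trans (closedBall_subset_closedBall hrt))
    · exact Set.inter_subset_left.trans
        (ball_subset_closedBall.trans (closedBall_subset_closedBall hrt))
  have hUvol : (s.card : ℝ≥0∞) * ENNReal.ofReal (D * r ^ n) ≤
      volume (⋃ p ∈ s, (ball p r ∩ Ω)) := by
    rw [measure_biUnion_finset hUdisj fun p _ => measurableSet_ball.inter hmeas]
    calc (s.card : ℝ≥0∞) * ENNReal.ofReal (D * r ^ n)
        = ∑ _p ∈ s, ENNReal.ofReal (D * r ^ n) := by rw [Finset.sum_const, nsmul_eq_mul]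
      _ ≤ ∑ p ∈ s, volume (ball p r ∩ Ω) := Finset.sum_le_sum fun p hp => (hdens2 p hp).1
  have hinlow : ∀ x ∈ ⋃ p ∈ s, (ball p r ∩ Ω),
      ENNReal.ofReal c_J * ENNReal.ofReal (D * r ^ n) ≤
        ∫⁻ y in Ωᶜ, ENNReal.ofReal (J₁ (t⁻¹ • (x - y))) := by
    intro x hx
    obtain ⟨p, hp, hxmem⟩ := Set.mem_iUnion₂.1 hx
    have haeJ : (fun y => J₁ (t⁻¹ • (x - y))) =ᵐ[volume] (fun y => J (t⁻¹ • (x - y))) := by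
      have qmp : Measure.QuasiMeasurePreserving
          (fun y : EuclideanSpace ℝ (Fin n) => t⁻¹ • (x - y)) volume volume :=
        (Measure.quasiMeasurePreserving_smul volume (inv_ne_zero ht.ne')).comp
          ((Measure.measurePreserving_sub_left volume x).quasiMeasurePreserving)
      exact qmp.ae_eq_comp hJ₁e.symm
    calc ENNReal.ofReal c_J * ENNReal.ofReal (D * r ^ n)
        ≤ ENNReal.ofReal c_J * volume (ball p r ∩ Ωᶜ) :=
          mul_le_mul_right (hdens2 p hp).2 _
      _ = ∫⁻ _y in ball p r ∩ Ωᶜ, ENNReal.ofReal c_J := (setLIntegral_const _ _).symm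
      _ ≤ ∫⁻ y in ball p r ∩ Ωᶜ, ENNReal.ofReal (J₁ (t⁻¹ • (x - y))) := by
          refine lintegral_mono_ae ?_
          filter_upwards [ae_restrict_of_ae haeJ,
            ae_restrict_mem (measurableSet_ball.inter hmeas.compl)] with y h1 h2
          have hyb : y ∈ ball p r := h2.1
          have hxb : x ∈ ball p r := hxmem.1
          have hnorm : ‖t⁻¹ • (x - y)‖ ≤ a_J := by
            rw [norm_smul, norm_inv, Real.norm_eq_abs, abs_of_pos ht, ← dist_eq_norm,
              inv_mul_le_iff₀ ht]
            have h3 := mem_ball.1 hyb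
            have h4 := mem_ball.1 hxb
            have h5 : dist x y ≤ dist x p + dist p y := dist_triangle x p y
            have h6 : dist p y = dist y p := dist_comm p y
            nlinarith
          rw [h1]
          exact ENNReal.ofReal_le_ofReal (hJlow _ hnorm)
      _ ≤ ∫⁻ y in Ωᶜ, ENNReal.ofReal (J₁ (t⁻¹ • (x - y))) :=
          lintegral_mono_set Set.inter_subset_right
  have hmain : (s.card : ℝ≥0∞) * (ENNReal.ofReal c_J * ENNReal.ofReal (D * r ^ n) *
      ENNReal.ofReal (D * r ^ n)) ≤
      ∫⁻ x in Ω, ∫⁻ y in Ωᶜ, ENNReal.ofReal (J₁ (t⁻¹ • (x - y))) := by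
    calc (s.card : ℝ≥0∞) * (ENNReal.ofReal c_J * ENNReal.ofReal (D * r ^ n) *
        ENNReal.ofReal (D * r ^ n))
        = (ENNReal.ofReal c_J * ENNReal.ofReal (D * r ^ n)) *
          ((s.card : ℝ≥0∞) * ENNReal.ofReal (D * r ^ n)) := by ring
      _ ≤ (ENNReal.ofReal c_J * ENNReal.ofReal (D * r ^ n)) *
          volume (⋃ p ∈ s, (ball p r ∩ Ω)) := mul_le_mul_right hUvol _
      _ = ∫⁻ _x in ⋃ p ∈ s, (ball p r ∩ Ω),
            (ENNReal.ofReal c_J * ENNReal.ofReal (D * r ^ n)) := (setLIntegral_const _ _).symm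
      _ ≤ ∫⁻ x in ⋃ p ∈ s, (ball p r ∩ Ω), ∫⁻ y in Ωᶜ, ENNReal.ofReal (J₁ (t⁻¹ • (x - y))) := by
          refine lintegral_mono_ae ?_
          filter_upwards [ae_restrict_mem hUmeas] with x hx using hinlow x hx
      _ ≤ ∫⁻ x in Ω, ∫⁻ y in Ωᶜ, ENNReal.ofReal (J₁ (t⁻¹ • (x - y))) :=
          lintegral_mono_set hUsub
  set V5 : ℝ≥0∞ := ENNReal.ofReal ((5 * t) ^ n) * vb1 with hV5
  have hV50 : V5 ≠ 0 := mul_ne_zero (ENNReal.ofReal_pos.2 (by positivity)).ne' hvb1pos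
  have hV5top : V5 ≠ ⊤ := ENNReal.mul_ne_top ENNReal.ofReal_ne_top hvb1top
  refine (ENNReal.mul_le_mul_iff_left hV50 hV5top).mp ?_
  have hA0 : (0:ℝ) ≤ M₂' * c_J * (D * κ ^ n) ^ 2 / 5 ^ n :=
    div_nonneg (mul_nonneg (mul_nonneg hM₂' hc.le) (sq_nonneg _)) (by positivity)
  have hDr0 : (0:ℝ) ≤ D * r ^ n := by positivity
  have hL : (ENNReal.ofReal (M₂' * c_J * (D * κ ^ n) ^ 2 / 5 ^ n) / vb1) *
      ENNReal.ofReal (t ^ (2 * (n:ℝ) - α)) * V5 =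
      ENNReal.ofReal M₂' * ENNReal.ofReal (t ^ ((n:ℝ) - α)) *
        (ENNReal.ofReal c_J * ENNReal.ofReal (D * r ^ n) * ENNReal.ofReal (D * r ^ n)) := by
    rw [hV5, div_eq_mul_inv]
    rw [show ENNReal.ofReal (M₂' * c_J * (D * κ ^ n) ^ 2 / 5 ^ n) * vb1⁻¹ *
        ENNReal.ofReal (t ^ (2 * (n:ℝ) - α)) * (ENNReal.ofReal ((5 * t) ^ n) * vb1) =
        ENNReal.ofReal (M₂' * c_J * (D * κ ^ n) ^ 2 / 5 ^ n) *
        ENNReal.ofReal (t ^ (2 * (n:ℝ) - α)) * ENNReal.ofReal ((5 * t) ^ n) *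
        (vb1⁻¹ * vb1) from by ring,
      ENNReal.inv_mul_cancel hvb1pos hvb1top, mul_one]
    rw [← ENNReal.ofReal_mul hA0, ← ENNReal.ofReal_mul (mul_nonneg hA0 (Real.rpow_nonneg ht.le _))]
    rw [← ENNReal.ofReal_mul hc.le, ← ENNReal.ofReal_mul (mul_nonneg hc.le hDr0),
      ← ENNReal.ofReal_mul hM₂', ← ENNReal.ofReal_mul
        (mul_nonneg hM₂' (Real.rpow_nonneg ht.le _))]
    congr 1
    have hXY : t ^ (2 * (n:ℝ) - α) * t ^ n = t ^ ((n:ℝ) - α) * (t ^ n * t ^ n) := by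
      rw [← Real.rpow_natCast t n, ← Real.rpow_add ht, ← Real.rpow_add ht, ← Real.rpow_add ht]
      congr 1; ring
    have h5 : ((5:ℝ) ^ n) ≠ 0 := by positivity
    rw [hrdef]
    field_simp
    rw [mul_pow t κ]
    linear_combination (M₂' * κ ^ n * κ ^ n * 5 ^ n) * hXY
  calc (ENNReal.ofReal (M₂' * c_J * (D * κ ^ n) ^ 2 / 5 ^ n) / vb1) *
      ENNReal.ofReal (t ^ (2 * (n:ℝ) - α)) * V5
      = ENNReal.ofReal M₂' * ENNReal.ofReal (t ^ ((n:ℝ) - α)) *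
        (ENNReal.ofReal c_J * ENNReal.ofReal (D * r ^ n) * ENNReal.ofReal (D * r ^ n)) := hL
    _ ≤ ((s.card : ℝ≥0∞) * (ENNReal.ofReal ((5 * t) ^ n) * vb1)) *
        (ENNReal.ofReal c_J * ENNReal.ofReal (D * r ^ n) * ENNReal.ofReal (D * r ^ n)) :=
        mul_le_mul_left (hvol.trans hcount) _
    _ = ((s.card : ℝ≥0∞) * (ENNReal.ofReal c_J * ENNReal.ofReal (D * r ^ n) *
        ENNReal.ofReal (D * r ^ n))) * V5 := by rw [hV5]; ring
    _ ≤ (∫⁻ x in Ω, ∫⁻ y in Ωᶜ, ENNReal.ofReal (J₁ (t⁻¹ • (x - y)))) * V5 :=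
        mul_le_mul_left hmain _

/-- two-sided asymptotics of the nonlocal energy functional for a domain whose
boundary has Minkowski dimension `α` with Minkowski contents bounded between `M₂` and `M₁`. -/
theorem stmt2 (n : ℕ) (Ω : Set (EuclideanSpace ℝ (Fin n)))
    (hmeas : MeasurableSet Ω) (hbd : Bornology.IsBounded Ω) (hpos : 0 < volume Ω)
    (α : ℝ) (hα : α ∈ Set.Icc ((n:ℝ) - 1) n)
    (M₁ M₂ : ℝ) (hM₂ : 0 < M₂)
    (hlowM : ENNReal.ofReal M₂ ≤
      Filter.liminf (fun t : ℝ =>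
        volume (Metric.thickening t (frontier Ω)) / ENNReal.ofReal (t ^ ((n:ℝ) - α)))
        (𝓝[>] 0))
    (hupM : Filter.limsup (fun t : ℝ =>
        volume (Metric.thickening t (frontier Ω)) / ENNReal.ofReal (t ^ ((n:ℝ) - α)))
        (𝓝[>] 0) ≤ ENNReal.ofReal M₁)
    (J : EuclideanSpace ℝ (Fin n) → ℝ)
    (hJnn : ∀ z, 0 ≤ J z) (hJint : Integrable J)
    (hJmom : Integrable (fun z => J z * ‖z‖ ^ n))
    (a_J c_J : ℝ) (ha : 0 < a_J) (hc : 0 < c_J)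
    (hJlow : ∀ z, ‖z‖ ≤ a_J → c_J ≤ J z)
    (D : ℝ) (hD : 0 < D)
    (hdens : ∀ x ∈ frontier Ω, ∀ t ∈ Set.Ioo (0:ℝ) 1,
      D * t ^ n ≤ min (volume (Metric.ball x t ∩ Ω)).toReal
        (volume (Metric.ball x t ∩ Ωᶜ)).toReal) :
    0 < Filter.liminf (fun t : ℝ =>
        ENNReal.ofReal (t ^ (α - 2 * (n:ℝ)) * ∫ x in Ω, ∫ y in Ωᶜ, J (t⁻¹ • (x - y))))
        (𝓝[>] 0) ∧
      Filter.limsup (fun t : ℝ =>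
        ENNReal.ofReal (t ^ (α - 2 * (n:ℝ)) * ∫ x in Ω, ∫ y in Ωᶜ, J (t⁻¹ • (x - y))))
        (𝓝[>] 0) < ⊤ := by
  rcases Nat.eq_zero_or_pos n with hn0 | hn
  · exfalso
    subst hn0
    have hΩ : Ω = Set.univ := by
      rcases Set.eq_empty_or_nonempty Ω with h | h
      · rw [h] at hpos; simp at hpos
      · obtain ⟨x, hx⟩ := h
        refine Set.eq_univ_of_forall fun y => ?_
        have hxy : y = x := by ext i; exact i.elim0
        rwa [hxy]
    rw [hΩ, frontier_univ] at hlowM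
    simp only [thickening_empty, measure_empty, ENNReal.zero_div] at hlowM
    rw [liminf_const] at hlowM
    exact (ENNReal.ofReal_pos.2 hM₂).ne' (le_antisymm hlowM (zero_le))
  have hn1 : (1:ℝ) ≤ (n:ℝ) := by exact_mod_cast hn
  have hα0 : (0:ℝ) ≤ α := by have := hα.1; linarith
  have hαn : α ≤ (n:ℝ) := hα.2
  have hΩfin : volume Ω ≠ ⊤ := by
    obtain ⟨R, hR⟩ := hbd.subset_closedBall 0
    exact ((measure_mono hR).trans_lt measure_closedBall_lt_top).ne
  have hJm := hJint.aestronglyMeasurable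
  set J₁ : EuclideanSpace ℝ (Fin n) → ℝ := fun z => max (hJm.mk J z) 0 with hJ₁def
  have hJ₁meas : Measurable J₁ := hJm.stronglyMeasurable_mk.measurable.max measurable_const
  have hJ₁e : J =ᵐ[volume] J₁ := by
    filter_upwards [hJm.ae_eq_mk] with z hz
    rw [hJ₁def]
    simp only
    rw [← hz, max_eq_left (hJnn z)]
  have hJ₁nn : ∀ z, 0 ≤ J₁ z := fun z => le_max_right _ _
  have hIJ : ∫⁻ z, ENNReal.ofReal (J₁ z) ≠ ⊤ := by
    have h1 : ∫⁻ z, ENNReal.ofReal (J₁ z) = ∫⁻ z, ENNReal.ofReal (J z) :=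
      lintegral_congr_ae (by filter_upwards [hJ₁e] with z hz; rw [hz])
    rw [h1]
    exact hJint.lintegral_lt_top.ne
  have hMom : ∫⁻ z, ENNReal.ofReal (J₁ z) * ENNReal.ofReal (‖z‖ ^ n) ≠ ⊤ := by
    have h1 : ∀ᵐ z ∂(volume : Measure (EuclideanSpace ℝ (Fin n))),
        ENNReal.ofReal (J₁ z) * ENNReal.ofReal (‖z‖ ^ n) = ENNReal.ofReal (J z * ‖z‖ ^ n) := by
      filter_upwards [hJ₁e] with z hz
      rw [← hz, ← ENNReal.ofReal_mul (hJnn z)]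
    rw [lintegral_congr_ae h1]
    exact hJmom.lintegral_lt_top.ne
  -- upper bound data
  have hup2 : Filter.limsup (fun t : ℝ =>
      volume (thickening t (frontier Ω)) / ENNReal.ofReal (t ^ ((n:ℝ) - α)))
      (𝓝[>] 0) < ENNReal.ofReal (|M₁| + 1) := by
    refine lt_of_le_of_lt hupM ?_
    refine lt_of_le_of_lt (ENNReal.ofReal_le_ofReal (le_abs_self M₁)) ?_
    exact (ENNReal.ofReal_lt_ofReal_iff (by positivity)).2 (by linarith [abs_nonneg M₁])
  have hev1 := eventually_lt_of_limsup_lt hup2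
  obtain ⟨t₀, ht₀pos, ht₀sub⟩ := ((nhdsGT_basis (0:ℝ)).eventually_iff).1 hev1
  have ht₀ : ∀ r : ℝ, 0 < r → r < t₀ → volume (thickening r (frontier Ω)) ≤
      ENNReal.ofReal ((|M₁| + 1) * r ^ ((n:ℝ) - α)) := by
    intro r hr hrt₀
    have h := (ht₀sub ⟨hr, hrt₀⟩).le
    have hb0 : ENNReal.ofReal (r ^ ((n:ℝ) - α)) ≠ 0 :=
      (ENNReal.ofReal_pos.2 (Real.rpow_pos_of_pos hr _)).ne'
    have h2 := (ENNReal.div_le_iff_le_mul (Or.inl hb0)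
      (Or.inl ENNReal.ofReal_ne_top)).1 h
    rwa [← ENNReal.ofReal_mul (by positivity)] at h2
  obtain ⟨C, hCtop, hCbound⟩ := aux_upper hn hmeas hΩfin hα0 hαn hJ₁meas hJ₁nn hIJ hMom
    (M' := |M₁| + 1) (by positivity) ht₀pos ht₀
  -- lower bound data
  have hlow2 : ENNReal.ofReal (M₂ / 2) < Filter.liminf (fun t : ℝ =>
      volume (thickening t (frontier Ω)) / ENNReal.ofReal (t ^ ((n:ℝ) - α))) (𝓝[>] 0) :=
    lt_of_lt_of_le ((ENNReal.ofReal_lt_ofReal_iff hM₂).2 (by linarith)) hlowM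
  have hev2 := eventually_lt_of_lt_liminf hlow2
  have hIoo : ∀ᶠ t in 𝓝[>] (0:ℝ), t ∈ Set.Ioo (0:ℝ) 1 :=
    eventually_of_mem (Ioo_mem_nhdsGT_of_mem ⟨le_rfl, one_pos⟩) fun t ht => ht
  have hκpos : (0:ℝ) < min (a_J / 2) 1 := lt_min (by linarith) one_pos
  have hL0pos : (0:ℝ≥0∞) < ENNReal.ofReal ((M₂ / 2) * c_J * (D * (min (a_J / 2) 1) ^ n) ^ 2 / 5 ^ n) /
      volume (ball (0 : EuclideanSpace ℝ (Fin n)) 1) :=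
    ENNReal.div_pos (ENNReal.ofReal_pos.2 (by positivity)).ne' measure_ball_lt_top.ne
  -- relating the functional to the lintegral
  have hrelate : ∀ᶠ t in 𝓝[>] (0:ℝ),
      ENNReal.ofReal (t ^ (α - 2 * (n:ℝ)) * ∫ x in Ω, ∫ y in Ωᶜ, J (t⁻¹ • (x - y))) =
        ENNReal.ofReal (t ^ (α - 2 * (n:ℝ))) *
          ∫⁻ x in Ω, ∫⁻ y in Ωᶜ, ENNReal.ofReal (J₁ (t⁻¹ • (x - y))) := by
    filter_upwards [self_mem_nhdsWithin] with t ht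
    have ht' : (0:ℝ) < t := Set.mem_Ioi.1 ht
    rw [ENNReal.ofReal_mul (Real.rpow_nonneg ht'.le _),
      aux_relate hmeas hΩfin hJ₁meas hJ₁nn hJ₁e hIJ ht']
  have hub : ∀ᶠ t in 𝓝[>] (0:ℝ),
      ENNReal.ofReal (t ^ (α - 2 * (n:ℝ)) * ∫ x in Ω, ∫ y in Ωᶜ, J (t⁻¹ • (x - y))) ≤ C := by
    filter_upwards [hrelate, hIoo] with t hrel ht
    rw [hrel]
    calc ENNReal.ofReal (t ^ (α - 2 * (n:ℝ))) *
          ∫⁻ x in Ω, ∫⁻ y in Ωᶜ, ENNReal.ofReal (J₁ (t⁻¹ • (x - y)))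
        ≤ ENNReal.ofReal (t ^ (α - 2 * (n:ℝ))) * (C * ENNReal.ofReal (t ^ (2 * (n:ℝ) - α))) :=
          mul_le_mul_right (hCbound t ht.1 ht.2.le) _
      _ = C * (ENNReal.ofReal (t ^ (α - 2 * (n:ℝ))) * ENNReal.ofReal (t ^ (2 * (n:ℝ) - α))) := by
          ring
      _ = C := by
          rw [← ENNReal.ofReal_mul (Real.rpow_nonneg ht.1.le _), ← Real.rpow_add ht.1,
            show (α - 2 * (n:ℝ)) + (2 * (n:ℝ) - α) = 0 by ring, Real.rpow_zero,
            ENNReal.ofReal_one, mul_one]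
  have hlb : ∀ᶠ t in 𝓝[>] (0:ℝ),
      ENNReal.ofReal ((M₂ / 2) * c_J * (D * (min (a_J / 2) 1) ^ n) ^ 2 / 5 ^ n) /
        volume (ball (0 : EuclideanSpace ℝ (Fin n)) 1) ≤
      ENNReal.ofReal (t ^ (α - 2 * (n:ℝ)) * ∫ x in Ω, ∫ y in Ωᶜ, J (t⁻¹ • (x - y))) := by
    filter_upwards [hrelate, hIoo, hev2] with t hrel ht hev
    rw [hrel]
    have hb0 : ENNReal.ofReal (t ^ ((n:ℝ) - α)) ≠ 0 :=
      (ENNReal.ofReal_pos.2 (Real.rpow_pos_of_pos ht.1 _)).ne'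
    have hvol : ENNReal.ofReal (M₂ / 2) * ENNReal.ofReal (t ^ ((n:ℝ) - α)) ≤
        volume (thickening t (frontier Ω)) :=
      (ENNReal.le_div_iff_mul_le (Or.inl hb0) (Or.inl ENNReal.ofReal_ne_top)).1 hev.le
    have hl := aux_lower hmeas hbd hJ₁e (by linarith : (0:ℝ) ≤ M₂ / 2) ha hc hJlow hD hdens
      ht.1 ht.2 hvol
    calc ENNReal.ofReal ((M₂ / 2) * c_J * (D * (min (a_J / 2) 1) ^ n) ^ 2 / 5 ^ n) /
          volume (ball (0 : EuclideanSpace ℝ (Fin n)) 1)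
        = (ENNReal.ofReal ((M₂ / 2) * c_J * (D * (min (a_J / 2) 1) ^ n) ^ 2 / 5 ^ n) /
            volume (ball (0 : EuclideanSpace ℝ (Fin n)) 1)) *
          (ENNReal.ofReal (t ^ (2 * (n:ℝ) - α)) * ENNReal.ofReal (t ^ (α - 2 * (n:ℝ)))) := by
          rw [← ENNReal.ofReal_mul (Real.rpow_nonneg ht.1.le _), ← Real.rpow_add ht.1,
            show (2 * (n:ℝ) - α) + (α - 2 * (n:ℝ)) = 0 by ring, Real.rpow_zero,
            ENNReal.ofReal_one, mul_one]
      _ = ((ENNReal.ofReal ((M₂ / 2) * c_J * (D * (min (a_J / 2) 1) ^ n) ^ 2 / 5 ^ n) /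
            volume (ball (0 : EuclideanSpace ℝ (Fin n)) 1)) *
          ENNReal.ofReal (t ^ (2 * (n:ℝ) - α))) * ENNReal.ofReal (t ^ (α - 2 * (n:ℝ))) := by
          ring
      _ ≤ (∫⁻ x in Ω, ∫⁻ y in Ωᶜ, ENNReal.ofReal (J₁ (t⁻¹ • (x - y)))) *
          ENNReal.ofReal (t ^ (α - 2 * (n:ℝ))) := mul_le_mul_left hl _
      _ = ENNReal.ofReal (t ^ (α - 2 * (n:ℝ))) *
          ∫⁻ x in Ω, ∫⁻ y in Ωᶜ, ENNReal.ofReal (J₁ (t⁻¹ • (x - y))) := mul_comm _ _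
  constructor
  · exact lt_of_lt_of_le hL0pos (le_liminf_of_le (by isBoundedDefault) hlb)
  · exact lt_of_le_of_lt (limsup_le_of_le (by isBoundedDefault) hub) hCtop.lt_top
end

section
/- Let F : (0,∞) → ℝ be a function satisfying the approximate self-similarity relation 4·F(t) = 3⁴·F(t/3) + R(t) for all t > 0, where |R(t)| ≤ C·t^(2n) with n = 2 and C > 0 a constant. Let α = log₃ 4 ∈ (1,2). Then for every t > 0 the limit lim_{i→∞} (3^(2n−α))^i · F(t/3^i) exists. -/
open Filter Topology

/-- existence of the limit along the geometric sequence `t/3^i` for a function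
satisfying the approximate self-similarity relation `4F(t) = 3⁴F(t/3) + R(t)` with
`|R(t)| ≤ C t⁴` (here `n = 2`, `α = log₃ 4`). -/
theorem stmt7 (F R : ℝ → ℝ) (C : ℝ) (hC : 0 < C)
    (hrel : ∀ t : ℝ, 0 < t → 4 * F t = 3 ^ 4 * F (t / 3) + R t)
    (hR : ∀ t : ℝ, 0 < t → |R t| ≤ C * t ^ 4)
    (t : ℝ) (ht : 0 < t) :
    ∃ L : ℝ, Filter.Tendsto
      (fun i : ℕ => ((3:ℝ) ^ (2 * 2 - Real.logb 3 4)) ^ i * F (t / 3 ^ i))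
      Filter.atTop (𝓝 L) := by
  have h3 : ((3:ℝ) ^ (2 * 2 - Real.logb 3 4)) = 81 / 4 := by
    rw [show (2 * 2 - Real.logb 3 4 : ℝ) = 4 - Real.logb 3 4 by norm_num,
      Real.rpow_sub (by norm_num), Real.rpow_logb (by norm_num) (by norm_num) (by norm_num),
      show (4:ℝ) = ((4:ℕ):ℝ) by norm_num, Real.rpow_natCast]
    norm_num
  simp only [h3]
  set a : ℕ → ℝ := fun i => (81/4:ℝ)^i * F (t / 3^i) with ha
  have key : ∀ i : ℕ, dist (a i) (a (i+1)) ≤ (C * t^4 / 4) * (1/4)^i := by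
    intro i
    have hti : 0 < t / 3^i := by positivity
    have hrel' := hrel (t/3^i) hti
    have hstep : a i - a (i+1) = (81/4:ℝ)^i * (R (t/3^i)/4) := by
      have ht3 : t / 3^(i+1) = t/3^i/3 := by rw [pow_succ, ← div_div]
      simp only [ha]
      rw [ht3]
      linear_combination (((81:ℝ)/4)^i/4) * hrel'
    have h81 : ((3:ℝ)^i)^4 = 81^i := by
      rw [← pow_mul, mul_comm, pow_mul]; norm_num
    have hpow : (81/4:ℝ)^i * (C * (t/3^i)^4) / 4 = (C * t^4 / 4) * (1/4)^i := by
      have h1 : (t/3^i)^4 = t^4/81^i := by rw [div_pow, h81]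
      rw [h1, div_pow, div_pow, one_pow]
      have h2 : ((81:ℝ))^i ≠ 0 := by positivity
      have h4 : ((4:ℝ))^i ≠ 0 := by positivity
      field_simp
    calc dist (a i) (a (i+1)) = |(81/4:ℝ)^i * (R (t/3^i)/4)| := by
          rw [Real.dist_eq, hstep]
      _ = (81/4:ℝ)^i * |R (t/3^i)| / 4 := by
          rw [abs_mul, abs_div, abs_of_nonneg (by positivity : (0:ℝ) ≤ (81/4:ℝ)^i)]
          norm_num
          ring
      _ ≤ (81/4:ℝ)^i * (C * (t/3^i)^4) / 4 := by
          have := hR (t/3^i) hti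
          have hp : (0:ℝ) ≤ (81/4:ℝ)^i := by positivity
          nlinarith
      _ = (C * t^4 / 4) * (1/4)^i := hpow
  have hcau : CauchySeq a := cauchySeq_of_le_geometric (1/4) (C*t^4/4) (by norm_num) key
  obtain ⟨L, hL⟩ := cauchySeq_tendsto_of_complete hcau
  exact ⟨L, hL⟩
end

section
/- For every λ ∈ (0,1) there exist constants C(λ) > 0 and δ(λ) ∈ (0,1) such that for all N ∈ ℕ₊ and all z, w ∈ ℂ with |z| < λ and |w| < λ, |e^(N z w̄) − Σ_{m=0}^{N−1} (N^m/m!)·(z w̄)^m| ≤ C · (e^(N|z w̄|)/√N) · δ^N. -/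
set_option maxHeartbeats 1000000


open Filter Topology

/-- exponential approximation of `e^{N z w̄}` by the Ginibre kernel
`K_N(z,w) = Σ_{m<N} (N^m/m!)(z w̄)^m` inside the disk of radius `λ < 1`. -/
theorem stmt11 (lam : ℝ) (hlam : lam ∈ Set.Ioo (0:ℝ) 1) :
    ∃ C : ℝ, 0 < C ∧ ∃ δ ∈ Set.Ioo (0:ℝ) 1,
      ∀ N : ℕ, 0 < N → ∀ z w : ℂ, ‖z‖ < lam → ‖w‖ < lam →
        ‖Complex.exp ((N:ℂ) * (z * (starRingEnd ℂ) w)) -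
            ∑ m ∈ Finset.range N,
              ((N:ℂ) ^ m / (Nat.factorial m : ℂ)) * (z * (starRingEnd ℂ) w) ^ m‖ ≤
          C * (Real.exp ((N:ℝ) * ‖z * (starRingEnd ℂ) w‖) / Real.sqrt N) *
            δ ^ N := by
  obtain ⟨hl0, hl1⟩ := hlam
  set a : ℝ := lam ^ 2 with ha
  have ha0 : 0 < a := by positivity
  have ha1 : a < 1 := by nlinarith
  set δ0 : ℝ := a * Real.exp (1 - a) with hδ0def
  have hδ00 : 0 < δ0 := by positivity
  have hδ01 : δ0 < 1 := by
    have h := Real.add_one_lt_exp (x := a - 1) (by intro h; nlinarith)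
    have h2 : a < Real.exp (a - 1) := by linarith
    have h3 : δ0 < Real.exp (a - 1) * Real.exp (1 - a) := by
      have := Real.exp_pos (1 - a)
      calc δ0 = a * Real.exp (1 - a) := rfl
        _ < Real.exp (a - 1) * Real.exp (1 - a) := by nlinarith
    rwa [← Real.exp_add, show a - 1 + (1 - a) = 0 by ring, Real.exp_zero] at h3
  set δ : ℝ := (1 + δ0) / 2 with hδdef
  have hδlt : δ0 < δ := by simp only [hδdef]; linarith
  have hδ1 : δ < 1 := by simp only [hδdef]; linarith
  have hδpos : 0 < δ := by simp only [hδdef]; linarith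
  set r : ℝ := δ0 / δ with hrdef
  have hr0 : 0 < r := by positivity
  have hr1 : r < 1 := (div_lt_one hδpos).2 hδlt
  -- boundedness of N * r^N
  have hsumr : Summable (fun n : ℕ => (n : ℝ) * r ^ n) := by
    have := summable_pow_mul_geometric_of_norm_lt_one (R := ℝ) 1
      (r := r) (by rwa [Real.norm_eq_abs, abs_of_pos hr0])
    simpa using this
  obtain ⟨B, hB⟩ := hsumr.tendsto_atTop_zero.bddAbove_range
  have hBmem : ∀ n : ℕ, (n : ℝ) * r ^ n ≤ B := fun n => hB (Set.mem_range_self n)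
  have hBpos : 0 < B := lt_of_lt_of_le (by simpa using hr0) (hBmem 1)
  refine ⟨B / (1 - a), div_pos hBpos (by linarith), δ, ⟨hδpos, hδ1⟩, ?_⟩
  intro N hN z w hz hw
  set u : ℂ := z * (starRingEnd ℂ) w with hu
  set s : ℝ := ‖u‖ with hs
  have hs0 : 0 ≤ s := norm_nonneg u
  have hsa : s < a := by
    have : s = ‖z‖ * ‖w‖ := by
      simp [hs, hu]
    rw [this, ha, sq]
    exact mul_lt_mul'' hz hw (norm_nonneg z) (norm_nonneg w)
  set x : ℂ := (N : ℂ) * u with hx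
  have hxabs : ‖x‖ = (N : ℝ) * s := by
    simp [hx, hs]
  have hsumnorm : Summable (fun m : ℕ => ‖x ^ m / (m.factorial : ℂ)‖) :=
    NormedSpace.norm_expSeries_div_summable x
  have hsum1 : Summable (fun m : ℕ => x ^ m / (m.factorial : ℂ)) := hsumnorm.of_norm
  have hexp : Complex.exp x = ∑' m : ℕ, x ^ m / (m.factorial : ℂ) := by
    rw [Complex.exp_eq_exp_ℂ, NormedSpace.exp_eq_tsum_div]
  have hker : ∑ m ∈ Finset.range N, ((N : ℂ) ^ m / (m.factorial : ℂ)) * u ^ m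
      = ∑ m ∈ Finset.range N, x ^ m / (m.factorial : ℂ) := by
    refine Finset.sum_congr rfl fun m _ => ?_
    rw [hx, mul_pow]; ring
  have hsplit := Summable.sum_add_tsum_nat_add N hsum1
  have hdiff : Complex.exp x - ∑ m ∈ Finset.range N, ((N : ℂ) ^ m / (m.factorial : ℂ)) * u ^ m
      = ∑' m : ℕ, x ^ (m + N) / ((m + N).factorial : ℂ) := by
    rw [hexp, hker, ← hsplit]; ring
  rw [hdiff]
  -- termwise bound
  have hterm : ∀ m : ℕ, ‖x ^ (m + N) / ((m + N).factorial : ℂ)‖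
      ≤ (((N : ℝ) * s) ^ N / (N.factorial : ℝ)) * a ^ m := by
    intro m
    have hnormval : ‖x ^ (m + N) / ((m + N).factorial : ℂ)‖
        = ((N : ℝ) * s) ^ (m + N) / ((m + N).factorial : ℝ) := by
      rw [norm_div, norm_pow]
      congr 1
      · rw [← hxabs]
      · rw [Complex.norm_natCast]
    rw [hnormval]
    have hfac : ((N.factorial : ℝ) * (N : ℝ) ^ m) ≤ ((m + N).factorial : ℝ) := by
      have h1 : N.factorial * N ^ m ≤ N.factorial * (N + 1) ^ m :=
        Nat.mul_le_mul_left _ (Nat.pow_le_pow_left (Nat.le_succ N) m)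
      have h2 : N.factorial * (N + 1) ^ m ≤ (N + m).factorial := Nat.factorial_mul_pow_le_factorial
      have := h1.trans h2
      calc ((N.factorial : ℝ) * (N : ℝ) ^ m) = ((N.factorial * N ^ m : ℕ) : ℝ) := by push_cast; ring
        _ ≤ (((N + m).factorial : ℕ) : ℝ) := by exact_mod_cast this
        _ = ((m + N).factorial : ℝ) := by rw [Nat.add_comm]
    have hNs0 : (0:ℝ) ≤ (N : ℝ) * s := by positivity
    calc ((N : ℝ) * s) ^ (m + N) / ((m + N).factorial : ℝ)
        ≤ ((N : ℝ) * s) ^ (m + N) / ((N.factorial : ℝ) * (N : ℝ) ^ m) := by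
          gcongr
        _ = (((N : ℝ) * s) ^ N / (N.factorial : ℝ)) * s ^ m := by
          rw [pow_add, mul_pow]
          have hNne : (N : ℝ) ≠ 0 := Nat.cast_ne_zero.2 hN.ne'
          have hfacne : (N.factorial : ℝ) ≠ 0 := Nat.cast_ne_zero.2 (Nat.factorial_ne_zero N)
          field_simp
        _ ≤ (((N : ℝ) * s) ^ N / (N.factorial : ℝ)) * a ^ m := by
          gcongr
  have hsumshift : Summable (fun m : ℕ => ‖x ^ (m + N) / ((m + N).factorial : ℂ)‖) :=
    (summable_nat_add_iff N).2 hsumnorm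
  have hsumgeo : Summable (fun m : ℕ => (((N : ℝ) * s) ^ N / (N.factorial : ℝ)) * a ^ m) :=
    (summable_geometric_of_lt_one ha0.le ha1).mul_left _
  calc ‖∑' m : ℕ, x ^ (m + N) / ((m + N).factorial : ℂ)‖
      ≤ ∑' m : ℕ, ‖x ^ (m + N) / ((m + N).factorial : ℂ)‖ := by
        exact norm_tsum_le_tsum_norm hsumshift
    _ ≤ ∑' m : ℕ, (((N : ℝ) * s) ^ N / (N.factorial : ℝ)) * a ^ m :=
        Summable.tsum_le_tsum hterm hsumshift hsumgeo
    _ = (((N : ℝ) * s) ^ N / (N.factorial : ℝ)) * (1 - a)⁻¹ := by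
        rw [tsum_mul_left, tsum_geometric_of_lt_one ha0.le ha1]
    _ ≤ B / (1 - a) * (Real.exp ((N : ℝ) * s) / Real.sqrt N) * δ ^ N := by
        -- step A: (Ns)^N / N! ≤ (s * e)^N
        have hA : ((N : ℝ) * s) ^ N / (N.factorial : ℝ) ≤ (s * Real.exp 1) ^ N := by
          have h1 : ((N : ℝ)) ^ N / (N.factorial : ℝ) ≤ Real.exp N :=
            Real.pow_div_factorial_le_exp (N:ℝ) (Nat.cast_nonneg N) N
          calc ((N : ℝ) * s) ^ N / (N.factorial : ℝ) = s ^ N * ((N : ℝ) ^ N / (N.factorial : ℝ)) := by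
                rw [mul_pow]; ring
            _ ≤ s ^ N * Real.exp N := by gcongr
            _ = (s * Real.exp 1) ^ N := by
                rw [mul_pow, ← Real.exp_one_pow]
        -- step B: s * e ≤ δ0 * exp s
        have hB2 : s * Real.exp 1 ≤ δ0 * Real.exp s := by
          have key : s * Real.exp a ≤ a * Real.exp s := by
            have h1 : (1 : ℝ) + (s - a) ≤ Real.exp (s - a) := by
              linarith [Real.add_one_le_exp (s - a)]
            have h2 : Real.exp s = Real.exp a * Real.exp (s - a) := by
              rw [← Real.exp_add]; ring_nf
            have hea : 0 < Real.exp a := Real.exp_pos a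
            have hstep : a * Real.exp a * (1 + (s - a)) ≤ a * Real.exp a * Real.exp (s - a) :=
              mul_le_mul_of_nonneg_left h1 (by positivity)
            have heq : a * Real.exp a * Real.exp (s - a) = a * Real.exp s := by
              rw [h2]; ring
            have h3 : 0 ≤ (a - s) * (1 - a) := mul_nonneg (by linarith) (by linarith)
            nlinarith [mul_nonneg hea.le h3]
          have hsplit1 : Real.exp 1 = Real.exp a * Real.exp (1 - a) := by
            rw [← Real.exp_add]; ring_nf
          have he1a : 0 < Real.exp (1 - a) := Real.exp_pos _
          calc s * Real.exp 1 = (s * Real.exp a) * Real.exp (1 - a) := by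
                rw [hsplit1]; ring
            _ ≤ (a * Real.exp s) * Real.exp (1 - a) := by gcongr
            _ = δ0 * Real.exp s := by rw [hδ0def]; ring
        have hC : (s * Real.exp 1) ^ N ≤ δ0 ^ N * Real.exp ((N : ℝ) * s) := by
          calc (s * Real.exp 1) ^ N ≤ (δ0 * Real.exp s) ^ N :=
                pow_le_pow_left₀ (by positivity) hB2 N
            _ = δ0 ^ N * Real.exp ((N : ℝ) * s) := by
                rw [mul_pow, ← Real.exp_nat_mul]
        -- step C: sqrt N * δ0^N ≤ B * δ^N
        have hsqrt : Real.sqrt N * δ0 ^ N ≤ B * δ ^ N := by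
          have hN1 : (1:ℝ) ≤ (N:ℝ) := by exact_mod_cast hN
          have h1 : Real.sqrt N ≤ (N : ℝ) := by
            calc Real.sqrt N ≤ Real.sqrt ((N:ℝ)^2) := Real.sqrt_le_sqrt (by nlinarith)
              _ = (N:ℝ) := Real.sqrt_sq (Nat.cast_nonneg N)
          have hδ0r : δ0 = r * δ := by
            rw [hrdef, div_mul_cancel₀]; exact hδpos.ne'
          calc Real.sqrt N * δ0 ^ N = ((N:ℝ) * r ^ N) * δ ^ N
                - ((N:ℝ) - Real.sqrt N) * r ^ N * δ ^ N := by
                rw [hδ0r, mul_pow]; ring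
            _ ≤ ((N:ℝ) * r ^ N) * δ ^ N := by
                have : 0 ≤ ((N:ℝ) - Real.sqrt N) * r ^ N * δ ^ N := by
                  apply mul_nonneg
                  apply mul_nonneg
                  · linarith
                  · positivity
                  · positivity
                linarith
            _ ≤ B * δ ^ N := by gcongr; exact hBmem N
        have hsqrtpos : 0 < Real.sqrt N := Real.sqrt_pos.2 (by exact_mod_cast hN)
        have hδ0N : δ0 ^ N ≤ B * δ ^ N / Real.sqrt N := by
          rw [le_div_iff₀ hsqrtpos]; linarith [hsqrt]
        have hexpNs : 0 < Real.exp ((N : ℝ) * s) := Real.exp_pos _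
        calc (((N : ℝ) * s) ^ N / (N.factorial : ℝ)) * (1 - a)⁻¹
            ≤ (δ0 ^ N * Real.exp ((N : ℝ) * s)) * (1 - a)⁻¹ := by
              gcongr
              · exact hA.trans hC
          _ ≤ ((B * δ ^ N / Real.sqrt N) * Real.exp ((N : ℝ) * s)) * (1 - a)⁻¹ := by
              exact mul_le_mul_of_nonneg_right
                (mul_le_mul_of_nonneg_right hδ0N hexpNs.le) (inv_nonneg.2 (by linarith))
          _ = B / (1 - a) * (Real.exp ((N : ℝ) * s) / Real.sqrt N) * δ ^ N := by
              field_simp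
end
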